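/- (Logarithmic regret divergence for the one-fair-coin bandit.) Fix θ ∈ (1/2,1). For γ ∈ (0,1) let D = 1 − 4γ²θ(1−θ), ζ_−(γ) = ln((1 − √D)/(2γθ)) / ln((1−θ)/θ), β_c(γ) = −1/(2ζ_−(γ) − 1), and define the regret of the analytic solution at the uniform belief by R(γ) = (2θ−1)/(4(1−γ)) + (β_c(γ)(2θ−1)/(2(1−γ))) · ( (1−β_c(γ))^{ζ_−(γ)} (1+β_c(γ))^{1−ζ_−(γ)} )^{−1}. Then lim_{γ→1⁻} R(γ) / ln(1/(1−γ)) = 1 / (4 ln(θ/(1−θ))). In particular the regret diverges logarithmically in the effective horizon 1/(1−γ). -/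

import Mathlib

/-!
Logarithmic regret divergence for the one-fair-coin two-state Bernoulli
bandit.  With `D = 1 − 4γ²θ(1−θ)`,
`ζ_−(γ) = ln((1 − √D)/(2γθ)) / ln((1−θ)/θ)`,
`β_c(γ) = −1/(2ζ_−(γ) − 1)` and regret of the analytic solution at the
uniform belief
`R(γ) = (2θ−1)/(4(1−γ))
        + (β_c(2θ−1)/(2(1−γ))) ((1−β_c)^{ζ_−}(1+β_c)^{1−ζ_−})⁻¹`,
one has `R(γ)/ln(1/(1−γ)) → 1/(4 ln(θ/(1−θ)))` as `γ → 1⁻`.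
-/

/-- The discriminant `D = 1 − 4γ²θ(1−θ)`. -/
noncomputable def Dq (θ γ : ℝ) : ℝ := 1 - 4 * γ ^ 2 * θ * (1 - θ)

/-- The exponent `ζ_−(γ) = ln((1 − √D)/(2γθ)) / ln((1−θ)/θ)`. -/
noncomputable def zetaMinus (θ γ : ℝ) : ℝ :=
  Real.log ((1 - Real.sqrt (Dq θ γ)) / (2 * γ * θ)) / Real.log ((1 - θ) / θ)

/-- The decision boundary `β_c(γ) = −1/(2ζ_−(γ) − 1)`. -/
noncomputable def betaC (θ γ : ℝ) : ℝ := -1 / (2 * zetaMinus θ γ - 1)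

/-- Regret of the analytic solution of the one-fair-coin bandit at the
uniform belief `β = 0`. -/
noncomputable def Rfc (θ γ : ℝ) : ℝ :=
  (2 * θ - 1) / (4 * (1 - γ))
    + (betaC θ γ * (2 * θ - 1) / (2 * (1 - γ)))
      * ((1 - betaC θ γ) ^ zetaMinus θ γ
          * (1 + betaC θ γ) ^ (1 - zetaMinus θ γ))⁻¹

/-!
Write `ε = 1 - γ` and `δ = ζ_− - 1`. Then `β_c = -1/(1 + 2δ)` and the regret collapses to
`R = (2θ-1)/(4ε) · (1 - δ^δ / (1+δ)^(1+δ))`. Since `ζ_−(1) = 1` and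
`ζ_−'(1) = -1/((2θ-1) ln(θ/(1-θ)))`, we get `δ ~ ε / ((2θ-1) ln(θ/(1-θ)))` as `γ → 1⁻`,
hence `ln(1/δ) ~ ln(1/ε)`; and `1 - δ^δ / (1+δ)^(1+δ) ~ δ ln(1/δ)` as `δ → 0⁺`, because
`δ^δ / (1+δ)^(1+δ) = exp(δ ln δ - (1+δ) ln(1+δ))` and `(1+δ) ln(1+δ) = O(δ)`. Multiplying,
`R ~ ln(1/ε) / (4 ln(θ/(1-θ)))`.
-/

open Real Filter Topology Asymptotics

theorem HasDerivAt.isEquivalent_sub {𝕜 F : Type*} [NontriviallyNormedField 𝕜]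
    [NormedAddCommGroup F] [NormedSpace 𝕜 F] {f : 𝕜 → F} {f' : F} {x : 𝕜}
    (hf : HasDerivAt f f' x) (hf' : f' ≠ 0) :
    (fun y ↦ f y - f x) ~[𝓝 x] fun y ↦ (y - x) • f' :=
  (HasDerivAtFilter.isEquivalent_sub hf hf').comp_tendsto
    (tendsto_id.prodMk tendsto_const_pure)

theorem isEquivalent_exp_sub_one : (fun y ↦ exp y - 1) ~[𝓝 0] fun y ↦ y := by
  simpa using (hasDerivAt_exp 0).isEquivalent_sub (exp_ne_zero 0)

theorem Asymptotics.IsEquivalent.log_of_const_mul {α : Type*} {l : Filter α} {f g : α → ℝ}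
    {c : ℝ} (hc : 0 < c) (hfg : f ~[l] fun x ↦ c * g x) (hg : Tendsto g l atTop) :
    (fun x ↦ Real.log (f x)) ~[l] fun x ↦ Real.log (g x) := by
  have h_log_mul : (fun x ↦ Real.log (c * g x)) ~[l] fun x ↦ Real.log (g x) := by
    refine (IsEquivalent.refl.const_add_of_norm_tendsto_atTop (c := Real.log c)
      (tendsto_norm_atTop_atTop.comp (tendsto_log_atTop.comp hg))).congr_left ?_
    filter_upwards [hg.eventually_gt_atTop 0] with x hx
    rw [Function.comp_apply, log_mul hc.ne' hx.ne']
  exact (hfg.log (hg.const_mul_atTop hc)).trans h_log_mul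

theorem Asymptotics.IsEquivalent.tendsto_nhdsGT_zero_of_const_mul {α : Type*} {l : Filter α}
    {f g : α → ℝ} {c : ℝ} (hc : 0 < c) (hfg : f ~[l] fun x ↦ c * g x)
    (hg : Tendsto g l (𝓝[>] 0)) : Tendsto f l (𝓝[>] 0) := by
  refine tendsto_nhdsWithin_iff.2 ⟨hfg.symm.tendsto_nhds ?_, (hfg.eventually_pos ?_).mono
    fun _ h ↦ h⟩
  · simpa using (hg.mono_right nhdsWithin_le_nhds).const_mul c
  · exact (tendsto_nhdsWithin_iff.1 hg).2.mono fun x hx ↦ mul_pos hc hx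

theorem tendsto_one_sub_nhdsLT_one : Tendsto (fun γ : ℝ ↦ 1 - γ) (𝓝[<] 1) (𝓝[>] 0) :=
  tendsto_nhdsWithin_iff.2
    ⟨((continuous_const.sub continuous_id).tendsto' 1 0 (sub_self 1)).mono_left nhdsWithin_le_nhds,
      eventually_nhdsWithin_of_forall fun γ (hγ : γ < 1) ↦ sub_pos.2 hγ⟩

theorem tendsto_log_one_div_nhdsGT_zero : Tendsto (fun δ : ℝ ↦ log (1 / δ)) (𝓝[>] 0) atTop := by
  simp only [one_div]
  exact tendsto_log_atTop.comp tendsto_inv_nhdsGT_zero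

theorem isBigO_one_add_mul_log_one_add :
    (fun δ : ℝ ↦ (1 + δ) * log (1 + δ)) =O[𝓝 0] fun δ ↦ δ := by
  have h := (HasDerivAt.comp_const_add (1 : ℝ) 0
    (by simpa using hasDerivAt_mul_log one_ne_zero)).isBigO_sub
  simpa using h

theorem isLittleO_self_mul_log_one_div :
    (fun δ : ℝ ↦ δ) =o[𝓝[>] 0] fun δ ↦ δ * log (1 / δ) := by
  have h := ((isLittleO_one_left_iff ℝ).2
    (tendsto_norm_atTop_atTop.comp tendsto_log_one_div_nhdsGT_zero)).mul_isBigO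
    (isBigO_refl (fun δ : ℝ ↦ δ) (𝓝[>] 0))
  simp only [one_mul] at h
  exact h.congr_right fun δ ↦ mul_comm _ _

theorem isEquivalent_one_sub_rpow_self_div_rpow :
    (fun δ : ℝ ↦ 1 - δ ^ δ / (1 + δ) ^ (1 + δ)) ~[𝓝[>] 0] fun δ ↦ δ * log (1 / δ) := by
  set u : ℝ → ℝ := fun δ ↦ δ * log δ - (1 + δ) * log (1 + δ) with hu_def
  have hu : Tendsto u (𝓝[>] 0) (𝓝 0) := by
    have hc : Continuous u := continuous_mul_log.sub (continuous_const_add 1).mul_log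
    simpa [hu_def] using (hc.tendsto 0).mono_left nhdsWithin_le_nhds
  have h_exp : (fun δ ↦ 1 - exp (u δ)) ~[𝓝[>] 0] fun δ ↦ -u δ := by
    simpa using (isEquivalent_exp_sub_one.comp_tendsto hu).neg
  have h_neg_u : (fun δ ↦ -u δ) ~[𝓝[>] 0] fun δ ↦ δ * log (1 / δ) := by
    have h := IsEquivalent.refl.add_isLittleO ((isBigO_one_add_mul_log_one_add.mono
      nhdsWithin_le_nhds).trans_isLittleO isLittleO_self_mul_log_one_div)
    refine h.congr_left (.of_forall fun δ ↦ ?_)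
    simp only [hu_def, one_div, log_inv, Pi.add_apply]
    ring
  refine (h_exp.trans h_neg_u).congr_left ?_
  filter_upwards [self_mem_nhdsWithin] with δ (hδ : 0 < δ)
  rw [rpow_def_of_pos hδ, rpow_def_of_pos (by linarith), ← exp_sub, hu_def]
  ring_nf

theorem isEquivalent_one_sub_rpow_self_div_rpow_of_const_mul {α : Type*} {l : Filter α}
    {δ ε : α → ℝ} {c : ℝ} (hc : 0 < c) (hδ : δ ~[l] fun x ↦ c * ε x)
    (hε : Tendsto ε l (𝓝[>] 0)) :
    (fun x ↦ 1 - δ x ^ δ x / (1 + δ x) ^ (1 + δ x)) ~[l] fun x ↦ c * ε x * log (1 / ε x) := by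
  have h_log : (fun x ↦ log (1 / δ x)) ~[l] fun x ↦ log (1 / ε x) :=
    (hδ.inv.congr_left (.of_forall fun x ↦ by simp)).congr_right
      (.of_forall fun x ↦ by simp [mul_comm]) |>.log_of_const_mul (inv_pos.2 hc)
      ((tendsto_inv_nhdsGT_zero.comp hε).congr fun x ↦ (one_div _).symm)
  exact (isEquivalent_one_sub_rpow_self_div_rpow.comp_tendsto
    (hδ.tendsto_nhdsGT_zero_of_const_mul hc hε)).trans (hδ.mul h_log)

theorem neg_one_div_mul_inv_rpow_mul_rpow {ζ : ℝ} (hζ : 1 < ζ) :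
    -1 / (2 * ζ - 1) * ((1 - -1 / (2 * ζ - 1)) ^ ζ * (1 + -1 / (2 * ζ - 1)) ^ (1 - ζ))⁻¹
      = -((ζ - 1) ^ (ζ - 1) / ζ ^ ζ) / 2 := by
  set w := 2 * ζ - 1
  have hw : 0 < w := by linarith
  have h_sub : 1 - -1 / w = 2 * ζ / w := by field_simp; ring
  have h_add : 1 + -1 / w = 2 * (ζ - 1) / w := by field_simp; ring
  have h_prod : (2 * ζ / w) ^ ζ * (2 * (ζ - 1) / w) ^ (1 - ζ)
      = (2 ^ ζ * 2 ^ (1 - ζ)) * ζ ^ ζ * (ζ - 1) ^ (1 - ζ) / (w ^ ζ * w ^ (1 - ζ)) := by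
    rw [div_rpow (by positivity) hw.le, div_rpow (by nlinarith) hw.le,
      mul_rpow (by norm_num) (by linarith), mul_rpow (by norm_num) (by linarith)]
    ring
  rw [h_sub, h_add, h_prod, ← rpow_add two_pos, ← rpow_add hw, add_sub_cancel, rpow_one,
    rpow_one, ← neg_sub ζ 1, rpow_neg (by linarith)]
  have : 0 < (ζ - 1) ^ (ζ - 1) := rpow_pos_of_pos (by linarith) _
  have : 0 < ζ ^ ζ := rpow_pos_of_pos (by linarith) _
  field_simp

theorem hasDerivAt_Dq (θ γ : ℝ) : HasDerivAt (Dq θ) (-(8 * γ * θ * (1 - θ))) γ :=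
  ((((hasDerivAt_pow 2 γ).const_mul 4).mul_const θ).mul_const (1 - θ)).const_sub 1
    |>.congr_deriv (by push_cast; ring)

theorem Dq_one (θ : ℝ) : Dq θ 1 = (2 * θ - 1) ^ 2 := by
  unfold Dq; ring

theorem sqrt_Dq_one {θ : ℝ} (hθ : 1 / 2 ≤ θ) : √(Dq θ 1) = 2 * θ - 1 := by
  rw [Dq_one, sqrt_sq (by linarith)]

theorem hasDerivAt_sqrt_Dq_one {θ : ℝ} (hθ : 1 / 2 < θ) :
    HasDerivAt (fun γ ↦ √(Dq θ γ)) (-(4 * θ * (1 - θ) / (2 * θ - 1))) 1 := by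
  have h_pos : 0 < 2 * θ - 1 := by linarith
  refine ((hasDerivAt_Dq θ 1).sqrt (by rw [Dq_one]; positivity)).congr_deriv ?_
  rw [sqrt_Dq_one hθ.le]
  field_simp
  ring

theorem zetaMinus_one {θ : ℝ} (hθ₀ : 1 / 2 < θ) (hθ₁ : θ < 1) : zetaMinus θ 1 = 1 := by
  have h_ratio : (1 - θ) / θ ≠ 1 := by
    rw [ne_eq, div_eq_one_iff_eq (by linarith)]; linarith
  rw [zetaMinus, sqrt_Dq_one hθ₀.le, show (1 - (2 * θ - 1)) / (2 * 1 * θ) = (1 - θ) / θ by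
    field_simp; ring]
  exact div_self (log_ne_zero_of_pos_of_ne_one (div_pos (by linarith) (by linarith)) h_ratio)

theorem hasDerivAt_zetaMinus_one {θ : ℝ} (hθ₀ : 1 / 2 < θ) (hθ₁ : θ < 1) :
    HasDerivAt (zetaMinus θ) (-(1 / ((2 * θ - 1) * log (θ / (1 - θ))))) 1 := by
  have h_pos : 0 < 2 * θ - 1 := by linarith
  have h_compl : 1 - θ ≠ 0 := by linarith
  have h_arg_one : (1 - √(Dq θ 1)) / (2 * 1 * θ) = (1 - θ) / θ := by
    rw [sqrt_Dq_one hθ₀.le]; field_simp; ring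
  have h_arg : HasDerivAt (fun γ ↦ (1 - √(Dq θ γ)) / (2 * γ * θ))
      ((1 - θ) / (θ * (2 * θ - 1))) 1 := by
    refine (((hasDerivAt_sqrt_Dq_one hθ₀).const_sub 1).div
      (((hasDerivAt_id' (1 : ℝ)).const_mul 2).mul_const θ) (by positivity)).congr_deriv ?_
    have : θ * 2 - 1 ≠ 0 := by linarith
    rw [sqrt_Dq_one hθ₀.le]
    field_simp
    ring
  refine ((h_arg.log (by rw [h_arg_one]; exact div_ne_zero h_compl (by linarith))).div_const
    (log ((1 - θ) / θ))).congr_deriv ?_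
  rw [h_arg_one, ← inv_div θ, log_inv]
  field_simp

theorem isEquivalent_zetaMinus_sub_one {θ : ℝ} (hθ₀ : 1 / 2 < θ) (hθ₁ : θ < 1) :
    (fun γ ↦ zetaMinus θ γ - 1) ~[𝓝[<] 1]
      fun γ ↦ 1 / ((2 * θ - 1) * log (θ / (1 - θ))) * (1 - γ) := by
  have h_ne : 1 / ((2 * θ - 1) * log (θ / (1 - θ))) ≠ 0 :=
    one_div_ne_zero (mul_ne_zero (by linarith)
      (log_pos ((one_lt_div (by linarith)).2 (by linarith))).ne')
  refine (((hasDerivAt_zetaMinus_one hθ₀ hθ₁).isEquivalent_sub (neg_ne_zero.2 h_ne)).mono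
    nhdsWithin_le_nhds).congr_left (.of_forall fun γ ↦ ?_) |>.congr_right (.of_forall fun γ ↦ ?_)
  · rw [zetaMinus_one hθ₀ hθ₁]
  · simp only [smul_eq_mul]
    ring

theorem Rfc_eq_mul_one_sub_rpow {θ γ : ℝ} (hζ : 1 < zetaMinus θ γ) :
    Rfc θ γ = (2 * θ - 1) / (4 * (1 - γ))
      * (1 - (zetaMinus θ γ - 1) ^ (zetaMinus θ γ - 1) / zetaMinus θ γ ^ zetaMinus θ γ) := by
  have h : betaC θ γ * ((1 - betaC θ γ) ^ zetaMinus θ γ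
      * (1 + betaC θ γ) ^ (1 - zetaMinus θ γ))⁻¹
      = -((zetaMinus θ γ - 1) ^ (zetaMinus θ γ - 1) / zetaMinus θ γ ^ zetaMinus θ γ) / 2 :=
    neg_one_div_mul_inv_rpow_mul_rpow hζ
  rw [Rfc]
  generalize 1 - γ = ε
  linear_combination (2 * θ - 1) / (2 * ε) * h

theorem one_fair_coin_logarithmic_regret
    (θ : ℝ) (hθ : θ ∈ Set.Ioo (1 / 2 : ℝ) 1) :
    Filter.Tendsto (fun γ => Rfc θ γ / Real.log (1 / (1 - γ)))
      (nhdsWithin 1 (Set.Iio (1 : ℝ)))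
      (nhds (1 / (4 * Real.log (θ / (1 - θ))))) := by
  obtain ⟨hθ₀, hθ₁⟩ := hθ
  have h_pos : 0 < 2 * θ - 1 := by linarith
  have hL : 0 < log (θ / (1 - θ)) := log_pos ((one_lt_div (by linarith)).2 (by linarith))
  have hc : 0 < 1 / ((2 * θ - 1) * log (θ / (1 - θ))) := one_div_pos.2 (mul_pos h_pos hL)
  have hδ := isEquivalent_zetaMinus_sub_one hθ₀ hθ₁
  have h_gap : (fun γ ↦ 1 - (zetaMinus θ γ - 1) ^ (zetaMinus θ γ - 1)
      / zetaMinus θ γ ^ zetaMinus θ γ) ~[𝓝[<] 1] _ :=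
    (isEquivalent_one_sub_rpow_self_div_rpow_of_const_mul hc hδ
    tendsto_one_sub_nhdsLT_one).congr_left (.of_forall fun γ ↦ by simp)
  have h_ratio := ((IsEquivalent.refl (u := fun γ ↦ (2 * θ - 1) / (4 * (1 - γ)))).mul h_gap).div
    (IsEquivalent.refl (u := fun γ ↦ log (1 / (1 - γ))))
  refine (h_ratio.congr_left ?_).tendsto_nhds_iff.2 (tendsto_const_nhds.congr' ?_)
  · filter_upwards [(tendsto_nhdsWithin_iff.1
      (hδ.tendsto_nhdsGT_zero_of_const_mul hc tendsto_one_sub_nhdsLT_one)).2] with γ hγ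
    simp [Rfc_eq_mul_one_sub_rpow (show 1 < zetaMinus θ γ by linarith [Set.mem_Ioi.1 hγ])]
  · filter_upwards [self_mem_nhdsWithin,
      (tendsto_log_one_div_nhdsGT_zero.comp tendsto_one_sub_nhdsLT_one).eventually_gt_atTop 0]
      with γ (hγ : γ < 1) h_log
    have h_eps : 1 - γ ≠ 0 := (sub_pos.2 hγ).ne'
    simp only [Pi.mul_apply, Pi.div_apply, Function.comp_apply] at h_log ⊢
    generalize 2 * θ - 1 = a at h_pos ⊢
    field_simp [h_pos.ne', h_log.ne', hL.ne']
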